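/- arXiv:1603.07316 — 2 statements merged into one kernel-verified Lean document; each statement's English description precedes it below -/
import Mathlib

section
/- Let n₁,n₂ ≥ 2, 1 ≤ s₁ ≤ n₁, 1 ≤ s₂ ≤ n₂. Suppose there exist a bilinear map B : ℂ^{n₁} × ℂ^{n₂} → ℂ^m and a pair (u,v), with u ∈ ℂ^{n₁} nonzero and s₁-sparse and v ∈ ℂ^{n₂} nonzero and s₂-sparse, at which the restriction of B to the set of all pairs of nonzero s₁-sparse and nonzero s₂-sparse vectors is weakly identifiable modulo scaling. Then there exists a linear map M : M(s₁,s₂) → ℂ^m such that M(X) ≠ 0 for every nonzero matrix X ∈ M(s₁,s₂) of the form X = e₁e₁ᵗ − abᵗ with a ∈ ℂ^{s₁}, b ∈ ℂ^{s₂}, where e₁ denotes the first standard basis vector of ℂ^{s₁} (equivalently, the projectivizations of ker M and of the set e₁e₁ᵗ − M¹(s₁,s₂) are disjoint). -/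
noncomputable section

/-- A vector in `ℂⁿ` is `s`-sparse if it has at most `s` nonzero entries. -/
def Sparse {n : ℕ} (s : ℕ) (u : Fin n → ℂ) : Prop := {i | u i ≠ 0}.ncard ≤ s

/-- The restriction of a bilinear map `B` to `V` is weakly identifiable modulo scaling at
`p₀ ∈ V` if `B(u,v) = B(u₀,v₀)` for `(u,v) ∈ V` implies that there is `λ ≠ 0` with
`u = λu₀` and `v = (1/λ)v₀`. -/
def WeakIdentAt {n₁ n₂ m : ℕ} (V : Set ((Fin n₁ → ℂ) × (Fin n₂ → ℂ)))
    (B : (Fin n₁ → ℂ) → (Fin n₂ → ℂ) → (Fin m → ℂ))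
    (p₀ : (Fin n₁ → ℂ) × (Fin n₂ → ℂ)) : Prop :=
  ∀ q ∈ V, B q.1 q.2 = B p₀.1 p₀.2 →
    ∃ l : ℂ, l ≠ 0 ∧ q.1 = l • p₀.1 ∧ q.2 = l⁻¹ • p₀.2

/-- extension-by-zero along an injective map, as a linear map -/
def extLin {s n : ℕ} (ι : Fin s → Fin n) (hι : Function.Injective ι) :
    (Fin s → ℂ) →ₗ[ℂ] (Fin n → ℂ) where
  toFun x := Function.extend ι x 0
  map_add' x y := by
    classical
    funext j
    by_cases h : ∃ i, ι i = j
    · obtain ⟨i, rfl⟩ := h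
      simp [hι.extend_apply]
    · simp [Function.extend_apply' _ _ _ h]
  map_smul' c x := by
    classical
    funext j
    by_cases h : ∃ i, ι i = j
    · obtain ⟨i, rfl⟩ := h
      simp [hι.extend_apply]
    · simp [Function.extend_apply' _ _ _ h]

lemma exists_T {n s : ℕ} (hs : 1 ≤ s) (hsn : s ≤ n) (u : Fin n → ℂ)
    (hu : u ≠ 0) (hsu : Sparse s u) :
    ∃ T : (Fin s → ℂ) →ₗ[ℂ] (Fin n → ℂ),
      Function.Injective T ∧ (∀ x, Sparse s (T x)) ∧
      T (Pi.single (⟨0, hs⟩ : Fin s) 1) = u := by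
  classical
  set F : Finset (Fin n) := Finset.univ.filter (fun i => u i ≠ 0) with hF
  have hFset : {i | u i ≠ 0} = (F : Set (Fin n)) := by ext i; simp [hF]
  have hFcard : F.card ≤ s := by
    have := hsu
    rwa [Sparse, hFset, Set.ncard_coe_finset] at this
  obtain ⟨F', hFF', hF'card⟩ := Finset.exists_superset_card_eq hFcard (by simpa using hsn)
  let ι : Fin s → Fin n := fun i => (F'.equivFin.symm (Fin.cast hF'card.symm i) : Fin n)
  have hι : Function.Injective ι := by
    intro i j hij
    have := F'.equivFin.symm.injective (Subtype.ext hij)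
    simpa [Fin.ext_iff] using congrArg Fin.val this
  have hsurj : ∀ j ∈ F', ∃ i, ι i = j := by
    intro j hj
    refine ⟨Fin.cast hF'card (F'.equivFin ⟨j, hj⟩), ?_⟩
    simp [ι]
  have hcover : ∀ j, u j ≠ 0 → ∃ i, ι i = j := by
    intro j hj
    exact hsurj j (hFF' (by simp [hF, hj]))
  set w : Fin s → ℂ := fun i => u (ι i) with hw
  have hEw : extLin ι hι w = u := by
    funext j
    by_cases h : ∃ i, ι i = j
    · obtain ⟨i, rfl⟩ := h
      simp [extLin, hι.extend_apply, hw]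
    · have hj : u j = 0 := by
        by_contra hj
        exact h (hcover j hj)
      simp [extLin, Function.extend_apply' _ _ _ h, hj]
  have hwne : ∃ k, w k ≠ 0 := by
    obtain ⟨j, hj⟩ := Function.ne_iff.mp hu
    obtain ⟨i, rfl⟩ := hcover j (by simpa using hj)
    exact ⟨i, by simpa [hw] using hj⟩
  obtain ⟨k, hk⟩ := hwne
  set z : Fin s := ⟨0, hs⟩ with hz
  set σ : Equiv.Perm (Fin s) := Equiv.swap z k with hσ
  set G : (Fin s → ℂ) →ₗ[ℂ] (Fin s → ℂ) :=
    LinearMap.funLeft ℂ ℂ σ + (LinearMap.proj z).smulRight (w - Pi.single k 1) with hG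
  have hGapp : ∀ (x : Fin s → ℂ) (i : Fin s),
      G x i = x (σ i) + x z * (w i - (Pi.single k 1 : Fin s → ℂ) i) := by
    intro x i; rfl
  have hσk : σ k = z := by simp [hσ, Equiv.swap_apply_right]
  have hGz : G (Pi.single z 1) = w := by
    funext i
    rw [hGapp]
    by_cases hik : i = k
    · subst hik
      rw [hσk]
      simp only [Pi.single_eq_same]
      ring
    · have hσi : σ i ≠ z := by
        intro h
        apply hik
        have h2 : σ (σ i) = σ z := congrArg σ h
        simpa [hσ, Equiv.swap_apply_self, Equiv.swap_apply_left] using h2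
      simp [Pi.single_eq_of_ne hσi, Pi.single_eq_of_ne hik]
  have hGinj : Function.Injective G := by
    have hker : ∀ x, G x = 0 → x = 0 := by
      intro x hx
      have hxz : x z = 0 := by
        have hk' := congrFun hx k
        rw [hGapp] at hk'
        simp only [hσk, Pi.single_eq_same, Pi.zero_apply] at hk'
        have hzw : x z * w k = 0 := by linear_combination hk'
        rcases mul_eq_zero.mp hzw with h | h
        · exact h
        · exact absurd h hk
      funext i
      have h := congrFun hx (σ.symm i)
      rw [hGapp] at h
      simpa [hxz, Equiv.apply_symm_apply] using h
    intro x y hxy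
    have : G (x - y) = 0 := by rw [map_sub, hxy, sub_self]
    have := hker _ this
    exact sub_eq_zero.mp this
  have hEinj : Function.Injective (extLin ι hι) := by
    have hker : ∀ x, extLin ι hι x = 0 → x = 0 := by
      intro x hx
      funext i
      have := congrFun hx (ι i)
      simpa [extLin, hι.extend_apply] using this
    intro x y hxy
    have : extLin ι hι (x - y) = 0 := by rw [map_sub, hxy, sub_self]
    exact sub_eq_zero.mp (hker _ this)
  refine ⟨(extLin ι hι).comp G, hEinj.comp hGinj, ?_, ?_⟩
  · intro x
    have hsub : {j | ((extLin ι hι).comp G) x j ≠ 0} ⊆ Set.range ι := by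
      intro j hj
      by_contra hjr
      apply hj
      have : ¬ ∃ i, ι i = j := by simpa [Set.range] using hjr
      simp [LinearMap.comp_apply, extLin, Function.extend_apply' _ _ _ this]
    have hr : (Set.range ι).ncard ≤ s := by
      have : Set.range ι = ↑(Finset.image ι Finset.univ) := by
        ext j; simp
      rw [this, Set.ncard_coe_finset]
      calc (Finset.image ι Finset.univ).card ≤ Finset.univ.card := Finset.card_image_le
        _ = s := by simp
    exact le_trans (Set.ncard_le_ncard hsub (Set.finite_range ι)) hr
  · rw [LinearMap.comp_apply, hGz]; exact hEw

theorem stmt10 (n₁ n₂ s₁ s₂ m : ℕ) (hn₁ : 2 ≤ n₁) (hn₂ : 2 ≤ n₂)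
    (hs₁ : 1 ≤ s₁) (hs₁n : s₁ ≤ n₁) (hs₂ : 1 ≤ s₂) (hs₂n : s₂ ≤ n₂)
    (hex : ∃ B : (Fin n₁ → ℂ) →ₗ[ℂ] (Fin n₂ → ℂ) →ₗ[ℂ] (Fin m → ℂ),
      ∃ u : Fin n₁ → ℂ, ∃ v : Fin n₂ → ℂ,
        u ≠ 0 ∧ Sparse s₁ u ∧ v ≠ 0 ∧ Sparse s₂ v ∧
        WeakIdentAt
          {q | q.1 ≠ 0 ∧ Sparse s₁ q.1 ∧ q.2 ≠ 0 ∧ Sparse s₂ q.2}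
          (fun x y => B x y) (u, v)) :
    ∃ M : Matrix (Fin s₁) (Fin s₂) ℂ →ₗ[ℂ] (Fin m → ℂ),
      ∀ (a : Fin s₁ → ℂ) (b : Fin s₂ → ℂ),
        Matrix.vecMulVec (Pi.single (⟨0, hs₁⟩ : Fin s₁) (1 : ℂ))
              (Pi.single (⟨0, hs₂⟩ : Fin s₂) (1 : ℂ))
            - Matrix.vecMulVec a b ≠ 0 →
        M (Matrix.vecMulVec (Pi.single (⟨0, hs₁⟩ : Fin s₁) (1 : ℂ))
              (Pi.single (⟨0, hs₂⟩ : Fin s₂) (1 : ℂ))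
            - Matrix.vecMulVec a b) ≠ 0 := by
  classical
  obtain ⟨B, u, v, hu, hsu, hv, hsv, hWI⟩ := hex
  obtain ⟨T₁, hT₁inj, hT₁sp, hT₁e⟩ := exists_T hs₁ hs₁n u hu hsu
  obtain ⟨T₂, hT₂inj, hT₂sp, hT₂e⟩ := exists_T hs₂ hs₂n v hv hsv
  set E₁ : Fin s₁ → ℂ := Pi.single (⟨0, hs₁⟩ : Fin s₁) 1 with hE₁
  set E₂ : Fin s₂ → ℂ := Pi.single (⟨0, hs₂⟩ : Fin s₂) 1 with hE₂
  -- B u v ≠ 0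
  have hBuv : B u v ≠ 0 := by
    intro h0
    have h2u : (2 : ℂ) • u ≠ 0 := smul_ne_zero two_ne_zero hu
    have hsp2 : Sparse s₁ ((2 : ℂ) • u) := by
      have : {i | ((2 : ℂ) • u) i ≠ 0} = {i | u i ≠ 0} := by
        ext i; simp
      rwa [Sparse, this]
    obtain ⟨l, hl, h1, h2⟩ := hWI ((2 : ℂ) • u, v) ⟨h2u, hsp2, hv, hsv⟩
      (by simp [map_smul, h0])
    obtain ⟨i, hi⟩ := Function.ne_iff.mp hu
    obtain ⟨j, hj⟩ := Function.ne_iff.mp hv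
    have hi' : u i ≠ 0 := by simpa using hi
    have hj' : v j ≠ 0 := by simpa using hj
    have hla : (2 : ℂ) = l := by
      have h1' := congrFun h1 i
      simp only [Pi.smul_apply, smul_eq_mul] at h1'
      exact mul_right_cancel₀ hi' h1'
    have hlb : (1 : ℂ) = l⁻¹ := by
      have h2' := congrFun h2 j
      simp only [Pi.smul_apply, smul_eq_mul] at h2'
      refine mul_right_cancel₀ hj' ?_
      rw [one_mul]
      exact h2'
    have hl1 : l = 1 := by
      rw [eq_comm, inv_eq_one] at hlb; exact hlb
    rw [hl1] at hla
    norm_num at hla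
  -- The linear map M
  set M : Matrix (Fin s₁) (Fin s₂) ℂ →ₗ[ℂ] (Fin m → ℂ) :=
    { toFun := fun X => ∑ i, B (T₁ (Pi.single i 1)) (T₂ (X i))
      map_add' := by
        intro X Y
        rw [← Finset.sum_add_distrib]
        refine Finset.sum_congr rfl fun i _ => ?_
        have hXY : (X + Y) i = X i + Y i := by
          funext j; simp [Matrix.add_apply]
        rw [hXY, map_add, map_add]
      map_smul' := by
        intro c X
        simp only [RingHom.id_apply]
        rw [Finset.smul_sum]
        refine Finset.sum_congr rfl fun i _ => ?_
        have hcX : (c • X) i = c • X i := by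
          funext j; simp [Matrix.smul_apply]
        rw [hcX, map_smul, map_smul] } with hM
  have hMapp : ∀ (a : Fin s₁ → ℂ) (b : Fin s₂ → ℂ),
      M (Matrix.vecMulVec a b) = B (T₁ a) (T₂ b) := by
    intro a b
    have hrow : ∀ i, Matrix.vecMulVec a b i = a i • b := by
      intro i; funext j; simp [Matrix.vecMulVec_apply]
    have : M (Matrix.vecMulVec a b) = ∑ i, a i • B (T₁ (Pi.single i 1)) (T₂ b) := by
      simp only [hM, LinearMap.coe_mk, AddHom.coe_mk]
      refine Finset.sum_congr rfl fun i _ => ?_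
      rw [hrow i, map_smul, map_smul]
    rw [this]
    have ha : ∑ i, a i • T₁ (Pi.single i 1) = T₁ a := by
      have hmv : ∀ i : Fin s₁, a i • T₁ (Pi.single i 1) = T₁ (a i • (Pi.single i 1 : Fin s₁ → ℂ)) :=
        fun i => (map_smul T₁ _ _).symm
      rw [Finset.sum_congr rfl fun i _ => hmv i, ← map_sum]
      congr 1
      funext j
      simp [Finset.sum_apply, Pi.single_apply]
    calc ∑ i, a i • B (T₁ (Pi.single i 1)) (T₂ b)
        = B (∑ i, a i • T₁ (Pi.single i 1)) (T₂ b) := by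
          rw [map_sum, LinearMap.sum_apply]
          refine Finset.sum_congr rfl fun i _ => ?_
          rw [map_smul, LinearMap.smul_apply]
      _ = B (T₁ a) (T₂ b) := by rw [ha]
  refine ⟨M, ?_⟩
  intro a b hX hMX
  apply hX
  have hMe : M (Matrix.vecMulVec E₁ E₂) = B u v := by
    rw [hMapp, hT₁e, hT₂e]
  have hEq : B (T₁ a) (T₂ b) = B u v := by
    rw [map_sub, hMe, hMapp] at hMX
    have := sub_eq_zero.mp hMX
    -- hMX : B u v - B (T₁ a) (T₂ b) = 0
    exact this.symm
  by_cases ha0 : a = 0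
  · exfalso
    rw [ha0, map_zero, map_zero, LinearMap.zero_apply] at hEq
    exact hBuv hEq.symm
  by_cases hb0 : b = 0
  · exfalso
    rw [hb0, map_zero, map_zero] at hEq
    exact hBuv hEq.symm
  have hT₁a : T₁ a ≠ 0 := fun h => ha0 (hT₁inj (by rw [h, map_zero]))
  have hT₂b : T₂ b ≠ 0 := fun h => hb0 (hT₂inj (by rw [h, map_zero]))
  obtain ⟨l, hl, h1, h2⟩ := hWI (T₁ a, T₂ b) ⟨hT₁a, hT₁sp a, hT₂b, hT₂sp b⟩ hEq
  have ha : a = l • E₁ := by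
    apply hT₁inj
    rw [map_smul, hT₁e]
    exact h1
  have hb : b = l⁻¹ • E₂ := by
    apply hT₂inj
    rw [map_smul, hT₂e]
    exact h2
  rw [ha, hb]
  have : Matrix.vecMulVec (l • E₁) (l⁻¹ • E₂) = Matrix.vecMulVec E₁ E₂ := by
    funext i j
    simp only [Matrix.vecMulVec_apply, Pi.smul_apply, smul_eq_mul]
    field_simp
  rw [this, sub_self]
end
end

section
/- Let n₁,n₂ ≥ 2 and let M : M(n₁,n₂) → ℂ^m be a linear map. Then M restricted to the set M¹(n₁,n₂) of matrices of rank at most one is injective if and only if there exists a constant C > 0 such that ‖M(X)‖₂ ≥ C‖X‖_F for every X ∈ M(n₁,n₂) of rank at most 2 (i.e., M is stably (n₁,n₂)-injective). -/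
/-!
A matrix has rank at most 2 exactly when it is a difference of two matrices of rank at most 1,
so `M` is injective on rank-one matrices iff it kills no nonzero matrix of rank at most 2.
Since rank is lower semicontinuous, the matrices of rank at most 2 form a closed cone; its
intersection with the unit sphere is compact, so `‖M X‖` attains a positive minimum `C` there,
and homogeneity extends `C * ‖X‖ ≤ ‖M X‖` to the whole cone.
-/

noncomputable section

/-- Frobenius norm of a complex matrix. -/
def frob {a b : ℕ} (X : Matrix (Fin a) (Fin b) ℂ) : ℝ :=
  Real.sqrt (∑ i, ∑ j, ‖X i j‖ ^ 2)

/-- Euclidean norm of a vector in `ℂ^m`. -/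
def l2 {m : ℕ} (v : Fin m → ℂ) : ℝ := Real.sqrt (∑ i, ‖v i‖ ^ 2)

namespace Matrix

variable {m n K : Type*} [Fintype n] [Field K]

theorem rank_sub_le (A B : Matrix m n K) : (A - B).rank ≤ A.rank + B.rank := by
  refine (Submodule.finrank_mono ?_).trans
    (Submodule.finrank_add_le_finrank_add_finrank (LinearMap.range A.mulVecLin) _)
  rintro _ ⟨v, rfl⟩
  exact Submodule.mem_sup.mpr ⟨A *ᵥ v, ⟨v, rfl⟩, -(B *ᵥ v), neg_mem ⟨v, rfl⟩,
    by simp [sub_eq_add_neg]⟩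

theorem rank_smul_le [Fintype m] (c : K) (A : Matrix m n K) : (c • A).rank ≤ A.rank := by
  classical
  simpa using rank_mul_le_right (c • (1 : Matrix m m K)) A

theorem exists_eq_sum_vecMulVec_of_rank_le [Finite m] {A : Matrix m n K} {r : ℕ}
    (h : A.rank ≤ r) :
    ∃ u : Fin r → m → K, ∃ v : Fin r → n → K, A = ∑ k, vecMulVec (u k) (v k) := by
  obtain ⟨f, -, hf, -⟩ := Submodule.exists_fun_fin_finrank_span_eq K (Set.range A.col)
  rw [rank_eq_finrank_span_cols] at h
  let u : Fin r → m → K := fun k =>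
    if hk : (k : ℕ) < Module.finrank K (Submodule.span K (Set.range A.col)) then f ⟨k, hk⟩ else 0
  have hcol : ∀ j, A.col j ∈ Submodule.span K (Set.range u) := by
    intro j
    have : Set.range f ⊆ Set.range u := by
      rintro _ ⟨k, rfl⟩
      exact ⟨Fin.castLE h k, by simp [u]⟩
    exact Submodule.span_mono this (hf.symm ▸ Submodule.subset_span ⟨j, rfl⟩)
  choose c hc using fun j => (Submodule.mem_span_range_iff_exists_fun K).mp (hcol j)
  refine ⟨u, fun k j => c j k, ?_⟩
  ext i j
  simpa [vecMulVec_apply, Matrix.sum_apply, mul_comm] using (congrFun (hc j) i).symm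

theorem exists_eq_sub_of_rank_le_two [Finite m] {X : Matrix m n K} (h : X.rank ≤ 2) :
    ∃ A B : Matrix m n K, A.rank ≤ 1 ∧ B.rank ≤ 1 ∧ X = A - B := by
  obtain ⟨u, v, rfl⟩ := exists_eq_sum_vecMulVec_of_rank_le h
  refine ⟨vecMulVec (u 0) (v 0), vecMulVec (-u 1) (v 1), rank_vecMulVec_le _ _,
    rank_vecMulVec_le _ _, ?_⟩
  simp [Fin.sum_univ_two, neg_vecMulVec]

theorem injOn_setOf_rank_le_one_iff [Finite m] {F : Type*} [AddCommGroup F]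
    (M : Matrix m n K →+ F) :
    Set.InjOn M {A | A.rank ≤ 1} ↔ ∀ X : Matrix m n K, X.rank ≤ 2 → M X = 0 → X = 0 := by
  constructor
  · intro hM X hX hMX
    obtain ⟨A, B, hA, hB, rfl⟩ := exists_eq_sub_of_rank_le_two hX
    rw [map_sub, sub_eq_zero] at hMX
    rw [hM hA hB hMX, sub_self]
  · intro hM A hA B hB hAB
    refine sub_eq_zero.mp (hM _ ((rank_sub_le A B).trans (add_le_add hA hB : _ ≤ 1 + 1)) ?_)
    rw [map_sub, hAB, sub_self]

theorem isClosed_setOf_rank_le {𝕜 : Type*} [NontriviallyNormedField 𝕜] [CompleteSpace 𝕜]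
    [Fintype m] (r : ℕ) : IsClosed {A : Matrix m n 𝕜 | A.rank ≤ r} := by
  classical
  let Φ : Matrix m n 𝕜 →ₗ[𝕜] (n → 𝕜) →L[𝕜] (m → 𝕜) :=
    LinearMap.toContinuousLinearMap.toLinearMap ∘ₗ toLin'.toLinearMap
  have hrank : ∀ A : Matrix m n 𝕜,
      A.rank ≤ r ↔ ¬ ((r + 1 : ℕ) : Cardinal) ≤ (Φ A : (n → 𝕜) →ₗ[𝕜] (m → 𝕜)).rank := by
    intro A
    rw [not_le, LinearMap.rank, ← Module.finrank_eq_rank, Nat.cast_lt, Nat.lt_succ_iff]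
    rfl
  simp_rw [hrank]
  exact ((isOpen_setOfPred_nat_le_rank (r + 1)).preimage
    Φ.continuous_of_finiteDimensional).isClosed_compl

end Matrix

theorem exists_pos_mul_norm_le_iff_of_isClosed_cone {𝕜 E F : Type*} [RCLike 𝕜]
    [NormedAddCommGroup E] [NormedSpace 𝕜 E] [FiniteDimensional 𝕜 E]
    [NormedAddCommGroup F] [NormedSpace 𝕜 F] (f : E →ₗ[𝕜] F) {S : Set E} (hS : IsClosed S)
    (hS_smul : ∀ x ∈ S, ∀ c : 𝕜, c • x ∈ S) :
    (∃ C : ℝ, 0 < C ∧ ∀ x ∈ S, C * ‖x‖ ≤ ‖f x‖) ↔ ∀ x ∈ S, f x = 0 → x = 0 := by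
  constructor
  · rintro ⟨C, hC, hCf⟩ x hx hfx
    have := hCf x hx
    rw [hfx, norm_zero] at this
    exact norm_le_zero_iff.mp (nonpos_of_mul_nonpos_right this hC)
  · intro hf
    have := FiniteDimensional.proper_rclike 𝕜 E
    have hcompact : IsCompact (S ∩ Metric.sphere 0 1) :=
      (isCompact_sphere 0 1).inter_left hS
    obtain ⟨C, hC, hCf⟩ := hcompact.exists_forall_le' (a := 0)
      (f.continuous_of_finiteDimensional.norm.continuousOn) fun x ⟨hxS, hx1⟩ =>
        norm_pos_iff.mpr fun h0 => by simp [hf x hxS h0] at hx1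
    refine ⟨C, hC, fun x hx => ?_⟩
    rcases eq_or_ne x 0 with rfl | hx0
    · simp
    have hnx : 0 < ‖x‖ := norm_pos_iff.mpr hx0
    have hunit := hCf (((‖x‖⁻¹ : ℝ) : 𝕜) • x) ⟨hS_smul x hx _, by
      simp [norm_smul, hnx.ne']⟩
    rw [map_smul, norm_smul, RCLike.norm_ofReal, abs_of_pos (inv_pos.mpr hnx)] at hunit
    rwa [le_inv_mul_iff₀ hnx, mul_comm] at hunit

attribute [local instance] Matrix.frobeniusNormedAddCommGroup Matrix.frobeniusNormedSpace

theorem frob_eq_norm {a b : ℕ} (X : Matrix (Fin a) (Fin b) ℂ) : frob X = ‖X‖ := by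
  simp [frob, Matrix.frobenius_norm_def, Real.sqrt_eq_rpow]

theorem l2_eq_norm {m : ℕ} (v : Fin m → ℂ) :
    l2 v = ‖(WithLp.toLp 2 v : EuclideanSpace ℂ (Fin m))‖ := by
  simp [l2, EuclideanSpace.norm_eq]

theorem stmt16_general (n₁ n₂ m : ℕ)
    (M : Matrix (Fin n₁) (Fin n₂) ℂ →ₗ[ℂ] (Fin m → ℂ)) :
    Set.InjOn M {X : Matrix (Fin n₁) (Fin n₂) ℂ | X.rank ≤ 1} ↔
      ∃ C : ℝ, 0 < C ∧ ∀ X : Matrix (Fin n₁) (Fin n₂) ℂ, X.rank ≤ 2 →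
        C * frob X ≤ l2 (M X) := by
  have hcone := exists_pos_mul_norm_le_iff_of_isClosed_cone
    ((WithLp.linearEquiv 2 ℂ (Fin m → ℂ)).symm.toLinearMap ∘ₗ M)
    (Matrix.isClosed_setOf_rank_le 2) fun X hX c => (Matrix.rank_smul_le c X).trans hX
  simp only [Set.mem_ofPred_eq, LinearMap.coe_comp, LinearEquiv.coe_coe, Function.comp_apply,
    WithLp.linearEquiv_symm_apply, AddEquiv.toEquiv_eq_coe, Equiv.invFun_as_coe,
    AddEquiv.coe_toEquiv_symm, WithLp.addEquiv_symm_apply, WithLp.toLp_eq_zero] at hcone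
  simp only [frob_eq_norm, l2_eq_norm]
  exact (Matrix.injOn_setOf_rank_le_one_iff M.toAddMonoidHom).trans hcone.symm

theorem stmt16 (n₁ n₂ m : ℕ) (hn₁ : 2 ≤ n₁) (hn₂ : 2 ≤ n₂)
    (M : Matrix (Fin n₁) (Fin n₂) ℂ →ₗ[ℂ] (Fin m → ℂ)) :
    Set.InjOn M {X : Matrix (Fin n₁) (Fin n₂) ℂ | X.rank ≤ 1} ↔
      ∃ C : ℝ, 0 < C ∧ ∀ X : Matrix (Fin n₁) (Fin n₂) ℂ, X.rank ≤ 2 →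
        C * frob X ≤ l2 (M X) :=
  stmt16_general n₁ n₂ m M
end
end
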